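/- arXiv:1512.02981 — 4 statements merged into one kernel-verified Lean document; each statement's English description precedes it below -/
import Mathlib

section
/- Let t ≥ 1, 1 ≤ p ≤ ⌊(t+5)/4⌋, m = t+3-2p, distinct positive reals r_1 < ... < r_p, weights w_1 = r_1^{-m} and w_k = (-1)^k r_k^{-m} ∏_{2≤l≤p, l≠k}(r_1²-r_l²)/(r_k²-r_l²) for k ≥ 2, and complex points z_{k,j} = r_k e^{iπ(2j+k)/m}. Then for every 1 ≤ s ≤ t and 0 ≤ s_1 ≤ ⌊(t-s)/2⌋, one has Σ_{k=1}^p Σ_{j=1}^m w_k |z_{k,j}|^{2s_1} z_{k,j}^s = 0. -/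
/-! The points of the `k`-th ring are `r k * exp (π k / m * I)` times the `m`-th roots of unity,
so summing `|z|^(2 s₁) z^s` over a ring gives zero unless `m ∣ s`; as `1 ≤ s ≤ t < 2m`, only
`s = m` survives, where `exp (π k I) = (-1)^k`. The remaining sum
`∑ₖ (-1)^k w k (r k)^m (r k ^ 2)^s₁` is, by the choice of the weights, the Lagrange interpolant
of `x ↦ x^s₁` on the nodes `r 2 ^ 2, …, r p ^ 2` evaluated at `r 1 ^ 2`, minus `(r 1 ^ 2)^s₁`;
it vanishes because `s₁ ≤ p - 2`. -/

open Finset Polynomial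

theorem IsPrimitiveRoot.sum_Icc_pow_pow {R : Type*} [CommRing R] [IsDomain R] {ω : R} {m : ℕ}
    (hω : IsPrimitiveRoot ω m) (s : ℕ) :
    ∑ j ∈ Icc 1 m, (ω ^ s) ^ j = if m ∣ s then (m : R) else 0 := by
  split_ifs with hdvd
  · simp [(hω.pow_eq_one_iff_dvd s).2 hdvd]
  · have hne : ω ^ s - 1 ≠ 0 := sub_ne_zero.2 (mt (hω.pow_eq_one_iff_dvd s).1 hdvd)
    have hperiod : (ω ^ s) ^ m = 1 := by rw [← pow_mul, mul_comm, pow_mul, hω.pow_eq_one, one_pow]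
    have hgeom : ∑ j ∈ range m, (ω ^ s) ^ j = 0 :=
      (mul_eq_zero.1 ((geom_sum_mul _ m).trans (by rw [hperiod, sub_self]))).resolve_right hne
    rw [← Ico_add_one_right_eq_Icc, sum_Ico_eq_sum_range, Nat.add_sub_cancel]
    simp_rw [pow_add, pow_one, ← mul_sum, hgeom, mul_zero]

theorem IsPrimitiveRoot.sum_norm_pow_mul_pow {ω : ℂ} {m : ℕ} (hω : IsPrimitiveRoot ω m)
    (c : ℂ) (a s : ℕ) :
    ∑ j ∈ Icc 1 m, (‖c * ω ^ j‖ : ℂ) ^ a * (c * ω ^ j) ^ s =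
      if m ∣ s then m * ‖c‖ ^ a * c ^ s else 0 := by
  rcases eq_or_ne m 0 with rfl | hm
  · simp
  have hnorm : ∀ j, ‖c * ω ^ j‖ = ‖c‖ := by simp [hω.norm'_eq_one hm]
  simp_rw [hnorm, mul_pow, ← pow_mul, mul_comm _ s, pow_mul, ← mul_sum, hω.sum_Icc_pow_pow]
  split_ifs <;> ring

theorem Complex.exp_pi_mul_div_mul_I_pow_self {m : ℕ} (hm : m ≠ 0) (k : ℕ) :
    exp (Real.pi * k / m * I) ^ m = (-1) ^ k := by
  rw [← exp_nat_mul, show (m : ℂ) * (Real.pi * k / m * I) = k * (Real.pi * I) by field_simp,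
    exp_nat_mul, exp_pi_mul_I]

theorem StrictMonoOn.injOn_sq {α R : Type*} [LinearOrder α] [Semiring R] [LinearOrder R]
    [IsStrictOrderedRing R] {f : α → R} {s : Set α} (hf : StrictMonoOn f s)
    (hf0 : ∀ x ∈ s, 0 ≤ f x) : Set.InjOn (fun x => f x ^ 2) s :=
  fun a ha b hb hab => hf.injOn ha hb ((pow_left_inj₀ (hf0 a ha) (hf0 b hb) two_ne_zero).1 hab)

theorem sum_pow_mul_prod_div_sub_eq_pow {K ι : Type*} [Field K] [DecidableEq ι] (s : Finset ι)
    (v : ι → K) (hv : Set.InjOn v s) {n : ℕ} (hn : n < #s) (x : K) :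
    ∑ k ∈ s, v k ^ n * ∏ l ∈ s.erase k, (x - v l) / (v k - v l) = x ^ n := by
  have hdeg : (X ^ n : K[X]).degree < #s := by
    simpa using (Nat.cast_lt (α := WithBot ℕ)).2 hn
  have h := congrArg (Polynomial.eval x) (Lagrange.eq_interpolate hv hdeg)
  simpa only [Lagrange.interpolate_apply, eval_finsetSum, eval_pow, eval_X, eval_mul, eval_C,
    Lagrange.basis, eval_prod, Lagrange.basisDivisor, eval_sub, div_eq_inv_mul] using h.symm

theorem sum_neg_one_pow_mul_weight_eq_zero {K : Type*} [Field K] (p m n : ℕ) (r w : ℕ → K)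
    (hr : ∀ k ∈ Icc 1 p, r k ≠ 0) (hinj : Set.InjOn (fun l => r l ^ 2) (Icc 2 p))
    (hw1 : w 1 = (r 1 ^ m)⁻¹)
    (hwk : ∀ k, 2 ≤ k → k ≤ p →
      w k = (-1) ^ k * (r k ^ m)⁻¹ *
        ∏ l ∈ (Icc 2 p).erase k, (r 1 ^ 2 - r l ^ 2) / (r k ^ 2 - r l ^ 2))
    (hn : n + 2 ≤ p) :
    ∑ k ∈ Icc 1 p, (-1) ^ k * w k * r k ^ m * (r k ^ 2) ^ n = 0 := by
  have hsplit : Icc 1 p = insert 1 (Icc 2 p) := by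
    ext k; simp only [mem_Icc, mem_insert]; omega
  have hfirst : (-1) ^ 1 * w 1 * r 1 ^ m * (r 1 ^ 2) ^ n = -(r 1 ^ 2) ^ n := by
    rw [hw1, pow_one, neg_one_mul, neg_mul, neg_mul,
      inv_mul_cancel₀ (pow_ne_zero m (hr 1 (by simp; omega))), one_mul]
  have hrest : ∀ k ∈ Icc 2 p, (-1) ^ k * w k * r k ^ m * (r k ^ 2) ^ n =
      (r k ^ 2) ^ n * ∏ l ∈ (Icc 2 p).erase k, (r 1 ^ 2 - r l ^ 2) / (r k ^ 2 - r l ^ 2) := by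
    intro k hk
    obtain ⟨hk2, hkp⟩ := mem_Icc.1 hk
    have hrk : r k ^ m ≠ 0 := pow_ne_zero m (hr k (by simp; omega))
    have hsign : ((-1 : K) ^ k) ^ 2 = 1 := by rw [← pow_mul, mul_comm, pow_mul, neg_one_sq, one_pow]
    rw [hwk k hk2 hkp]
    field_simp
    rw [hsign, one_mul, mul_comm]
  have hcard : n < #(Icc 2 p) := by simp; omega
  rw [hsplit, sum_insert (by simp), hfirst, sum_congr rfl hrest,
    sum_pow_mul_prod_div_sub_eq_pow _ _ hinj hcard, neg_add_cancel]

open Real Complex in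
theorem tight_planar_design_moments_general (t p m : ℕ)
    (hpt : p ≤ (t + 5) / 4) (hm : m = t + 3 - 2 * p)
    (r : ℕ → ℝ)
    (hpos : ∀ k ∈ Finset.Icc 1 p, 0 < r k)
    (hmono : ∀ k ∈ Finset.Icc 1 p, ∀ l ∈ Finset.Icc 1 p, k < l → r k < r l)
    (w : ℕ → ℝ)
    (hw1 : w 1 = (r 1 ^ m)⁻¹)
    (hwk : ∀ k, 2 ≤ k → k ≤ p →
      w k = (-1) ^ k * (r k ^ m)⁻¹ *
        ∏ l ∈ (Finset.Icc 2 p).erase k, (r 1 ^ 2 - r l ^ 2) / (r k ^ 2 - r l ^ 2))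
    (z : ℕ → ℕ → ℂ)
    (hz : ∀ k j, z k j = (r k : ℂ) * Complex.exp (((π : ℂ) * (2 * j + k) / m) * Complex.I))
    (s s₁ : ℕ) (hs1 : 1 ≤ s) (hst : s ≤ t) (hs₁ : s₁ ≤ (t - s) / 2) :
    ∑ k ∈ Finset.Icc 1 p, ∑ j ∈ Finset.Icc 1 m,
      (w k : ℂ) * (‖z k j‖ : ℂ) ^ (2 * s₁) * z k j ^ s = 0 := by
  have hm0 : m ≠ 0 := by omega
  have hω := Complex.isPrimitiveRoot_exp m hm0
  set ω := exp (2 * π * I / m)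
  set c : ℕ → ℂ := fun k => r k * exp (π * k / m * I) with hc
  have hzc : ∀ k j, z k j = c k * ω ^ j := by
    intro k j
    rw [hz, mul_assoc, ← Complex.exp_nat_mul, ← Complex.exp_add]
    congr 2
    ring
  simp_rw [hzc, mul_assoc (w _ : ℂ), ← mul_sum, hω.sum_norm_pow_mul_pow]
  split_ifs with hdvd
  swap
  · simp
  have hsm : s = m := Nat.eq_of_dvd_of_lt_two_mul (by omega) hdvd (by omega)
  have hinj : Set.InjOn (fun l => r l ^ 2) (Icc 2 p) :=
    (StrictMonoOn.injOn_sq (fun k hk l hl => hmono k hk l hl) fun k hk => (hpos k hk).le).mono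
      (Icc_subset_Icc_left one_le_two)
  calc ∑ k ∈ Icc 1 p, (w k : ℂ) * (m * ‖c k‖ ^ (2 * s₁) * c k ^ s)
      = m * ((∑ k ∈ Icc 1 p, (-1) ^ k * w k * r k ^ m * (r k ^ 2) ^ s₁ : ℝ) : ℂ) := by
        push_cast
        rw [mul_sum]
        refine sum_congr rfl fun k hk => ?_
        have hnorm : ‖c k‖ = r k := by simp [hc, Complex.norm_exp, (hpos k hk).le]
        rw [hsm, hnorm, hc, mul_pow, Complex.exp_pi_mul_div_mul_I_pow_self hm0]
        ring
    _ = 0 := by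
      rw [sum_neg_one_pow_mul_weight_eq_zero p m s₁ r w (fun k hk => (hpos k hk).ne') hinj hw1 hwk
        (by omega), ofReal_zero, mul_zero]

open Real Complex in
theorem tight_planar_design_moments (t p m : ℕ) (ht : 1 ≤ t) (hp : 1 ≤ p)
    (hpt : p ≤ (t + 5) / 4) (hm : m = t + 3 - 2 * p)
    (r : ℕ → ℝ)
    (hpos : ∀ k ∈ Finset.Icc 1 p, 0 < r k)
    (hmono : ∀ k ∈ Finset.Icc 1 p, ∀ l ∈ Finset.Icc 1 p, k < l → r k < r l)
    (w : ℕ → ℝ)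
    (hw1 : w 1 = (r 1 ^ m)⁻¹)
    (hwk : ∀ k, 2 ≤ k → k ≤ p →
      w k = (-1) ^ k * (r k ^ m)⁻¹ *
        ∏ l ∈ (Finset.Icc 2 p).erase k, (r 1 ^ 2 - r l ^ 2) / (r k ^ 2 - r l ^ 2))
    (z : ℕ → ℕ → ℂ)
    (hz : ∀ k j, z k j = (r k : ℂ) * Complex.exp (((π : ℂ) * (2 * j + k) / m) * Complex.I))
    (s s₁ : ℕ) (hs1 : 1 ≤ s) (hst : s ≤ t) (hs₁ : s₁ ≤ (t - s) / 2) :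
    ∑ k ∈ Finset.Icc 1 p, ∑ j ∈ Finset.Icc 1 m,
      (w k : ℂ) * (‖z k j‖ : ℂ) ^ (2 * s₁) * z k j ^ s = 0 :=
  tight_planar_design_moments_general t p m hpt hm r hpos hmono w hw1 hwk z hz s s₁ hs1 hst hs₁
end

section
/- A finite weighted set (X, w) in ℝ² \ {0} with positive weights is a Euclidean t-design if and only if Σ_{z∈X} w(z)·|z|^{2s_1}·z^s = 0 for every 1 ≤ s ≤ t and 0 ≤ s_1 ≤ ⌊(t-s)/2⌋, where points of ℝ² are identified with complex numbers. -/
open MeasureTheory in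
/-- `(X, w)` is a Euclidean `t`-design in the plane (identified with `ℂ`):
for every polynomial `f` on `ℝ²` of total degree at most `t`, the sum over the norm
spectrum of the layer weights times the average of `f` over the corresponding circle
equals the weighted sum of `f` over `X`.  The average of `f` over the circle of
radius `ρ` is `(2π)⁻¹ ∫_0^{2π} f(ρ cos θ, ρ sin θ) dθ`. -/
def IsEuclideanDesign2 (X : Finset ℂ) (w : ℂ → ℝ) (t : ℕ) : Prop :=
  ∀ f : MvPolynomial (Fin 2) ℝ, f.totalDegree ≤ t →
    ∑ ρ ∈ X.image (fun z : ℂ => ‖z‖),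
      ((∑ z ∈ X.filter (fun z => ‖z‖ = ρ), w z) *
        ((2 * Real.pi)⁻¹ * ∫ θ in (0:ℝ)..(2 * Real.pi),
          MvPolynomial.eval ![ρ * Real.cos θ, ρ * Real.sin θ] f)) =
    ∑ z ∈ X, w z * MvPolynomial.eval ![z.re, z.im] f

/-! The circle average of `z ^ j * conj z ^ k` over `‖z‖ = ρ` is `ρ ^ (2 * j)` if `j = k` and `0`
otherwise. Hence the defect `∑ w(z) (circle average − value at z)` vanishes on `z ^ k * conj z ^ k`
and equals minus the moment `∑ w(z) ‖z‖ ^ (2k) z ^ s` on `z ^ (s + k) * conj z ^ k`. The defect is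
linear on continuous functions, and the monomials `z ^ j * conj z ^ k` with `j + k ≤ t` span the
same polynomials as the monomials `x ^ a * y ^ b` with `a + b ≤ t`, so being a `t`-design amounts
to the vanishing of these moments. -/

open Real Finset MvPolynomial
open scoped ComplexConjugate

namespace EuclideanDesign2

lemma totalDegree_C_mul_X_add_C_mul_X_le {σ R : Type*} [CommSemiring R] (a b : R) (i j : σ) :
    (C a * X i + C b * X j : MvPolynomial σ R).totalDegree ≤ 1 := by
  refine (totalDegree_add _ _).trans (max_le ?_ ?_) <;>
    · rw [C_mul_X_eq_monomial]
      exact (totalDegree_monomial_le _ _).trans (by simp)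

lemma totalDegree_pow_mul_pow_le {σ R : Type*} [CommSemiring R] {p q : MvPolynomial σ R}
    (hp : p.totalDegree ≤ 1) (hq : q.totalDegree ≤ 1) (j k : ℕ) :
    (p ^ j * q ^ k).totalDegree ≤ j + k :=
  (totalDegree_mul _ _).trans <| add_le_add
    ((totalDegree_pow _ _).trans (by simpa using Nat.mul_le_mul_left j hp))
    ((totalDegree_pow _ _).trans (by simpa using Nat.mul_le_mul_left k hq))

lemma pow_mul_conj_pow_eq_eval (z : ℂ) (j k : ℕ) :
    z ^ j * conj z ^ k = eval ![(z.re : ℂ), (z.im : ℂ)]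
      ((C 1 * X 0 + C Complex.I * X 1) ^ j * (C 1 * X 0 + C (-Complex.I) * X 1) ^ k) := by
  have hconj : conj z = z.re + -Complex.I * z.im := by
    apply Complex.ext <;> simp
  simp [hconj, mul_comm Complex.I, Complex.re_add_im]

lemma re_pow_mul_im_pow_eq_eval (z : ℂ) (a b : ℕ) :
    (z.re : ℂ) ^ a * (z.im : ℂ) ^ b = eval ![z, conj z]
      ((C 2⁻¹ * X 0 + C 2⁻¹ * X 1) ^ a *
        (C (-Complex.I / 2) * X 0 + C (Complex.I / 2) * X 1) ^ b) := by
  have hre : (z.re : ℂ) = 2⁻¹ * z + 2⁻¹ * conj z := by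
    apply Complex.ext <;> simp
    ring
  have him : (z.im : ℂ) = -Complex.I / 2 * z + Complex.I / 2 * conj z := by
    apply Complex.ext <;> simp <;> ring
  simp [hre, him]

variable {E : Type*} [NormedAddCommGroup E] [NormedSpace ℝ E] (X : Finset ℂ) (w : ℂ → ℝ)

noncomputable def designDefect (g : ℂ → E) : E :=
  ∑ z ∈ X, w z • (circleAverage g 0 ‖z‖ - g z)

lemma sum_layers_smul_eq_sum (A : ℝ → E) :
    ∑ ρ ∈ X.image (fun z : ℂ => ‖z‖), (∑ z ∈ X with ‖z‖ = ρ, w z) • A ρ =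
      ∑ z ∈ X, w z • A ‖z‖ := by
  rw [← sum_fiberwise_of_maps_to fun z hz => mem_image_of_mem (fun z : ℂ => ‖z‖) hz]
  refine sum_congr rfl fun ρ _ => ?_
  rw [sum_smul]
  exact sum_congr rfl fun z hz => by rw [(mem_filter.1 hz).2]

lemma isEuclideanDesign2_iff_designDefect (t : ℕ) :
    IsEuclideanDesign2 X w t ↔ ∀ f : MvPolynomial (Fin 2) ℝ, f.totalDegree ≤ t →
      designDefect X w (fun z => eval ![z.re, z.im] f) = 0 := by
  refine forall₂_congr fun f _ => ?_
  have hlayers := sum_layers_smul_eq_sum X w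
    fun ρ => circleAverage (fun z : ℂ => eval ![z.re, z.im] f) 0 ρ
  simp only [circleAverage_def, circleMap_zero_re, circleMap_zero_im, smul_eq_mul] at hlayers
  rw [hlayers, designDefect, ← sub_eq_zero]
  simp only [smul_eq_mul, mul_sub, sum_sub_distrib, circleAverage_def, circleMap_zero_re,
    circleMap_zero_im]

variable {X w}

lemma designDefect_fun_sum {ι : Type*} (s : Finset ι) {g : ι → ℂ → E}
    (hg : ∀ i ∈ s, Continuous (g i)) :
    designDefect X w (fun z => ∑ i ∈ s, g i z) = ∑ i ∈ s, designDefect X w (g i) := by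
  have hint : ∀ ρ : ℝ, ∀ i ∈ s, CircleIntegrable (g i) 0 ρ := fun ρ i hi =>
    (hg i hi).continuousOn.circleIntegrable'
  simp only [designDefect, circleAverage_fun_sum (hint _), ← sum_sub_distrib, smul_sum]
  exact sum_comm

lemma designDefect_const_smul {𝕜 : Type*} [NormedDivisionRing 𝕜] [Module 𝕜 E]
    [NormSMulClass 𝕜 E] [SMulCommClass ℝ 𝕜 E] (a : 𝕜) (g : ℂ → E) :
    designDefect X w (fun z => a • g z) = a • designDefect X w g := by
  simp only [designDefect, circleAverage_fun_smul, ← smul_sub, smul_sum]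
  exact sum_congr rfl fun z _ => smul_comm _ _ _

lemma designDefect_eval_eq_zero {𝕜 : Type*} [RCLike 𝕜] {v : ℂ → Fin 2 → 𝕜} (hv : Continuous v)
    {t : ℕ} (hmon : ∀ a b, a + b ≤ t → designDefect X w (fun z => v z 0 ^ a * v z 1 ^ b) = 0)
    {p : MvPolynomial (Fin 2) 𝕜} (hp : p.totalDegree ≤ t) :
    designDefect X w (fun z => eval (v z) p) = 0 := by
  simp only [eval_eq', Fin.prod_univ_two]
  rw [designDefect_fun_sum _ fun d _ => by fun_prop]
  refine sum_eq_zero fun d hd => ?_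
  have hdeg : d 0 + d 1 ≤ t := by
    have := le_totalDegree hd
    rw [Finsupp.sum_fintype _ _ fun _ => rfl, Fin.sum_univ_two] at this
    omega
  simp only [← smul_eq_mul (coeff d p), designDefect_const_smul, hmon _ _ hdeg, smul_zero]

lemma designDefect_ofReal {𝕜 : Type*} [RCLike 𝕜] (g : ℂ → ℝ) :
    designDefect X w (fun z => (g z : 𝕜)) = designDefect X w g := by
  simp only [designDefect, circleAverage_def, RCLike.intervalIntegral_ofReal,
    RCLike.real_smul_eq_coe_mul]
  push_cast
  rfl

lemma designDefect_conj (g : ℂ → ℂ) :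
    designDefect X w (fun z => conj (g z)) = conj (designDefect X w g) := by
  simp only [designDefect, circleAverage_def, intervalIntegral.intervalIntegral_conj, map_sum,
    Complex.real_smul, map_mul, map_sub, Complex.conj_ofReal]

lemma integral_exp_int_mul_I_mul (m : ℤ) :
    ∫ θ in (0 : ℝ)..2 * π, Complex.exp (m * Complex.I * θ) = if m = 0 then (2 * π : ℂ) else 0 := by
  rcases eq_or_ne m 0 with rfl | hm
  · simp
  · have hc : (m : ℂ) * Complex.I ≠ 0 := mul_ne_zero (Int.cast_ne_zero.2 hm) Complex.I_ne_zero
    have hperiod : (m : ℂ) * Complex.I * (2 * π : ℝ) = m * (2 * π * Complex.I) := by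
      push_cast
      ring
    rw [if_neg hm, integral_exp_mul_complex hc, hperiod, Complex.exp_int_mul_two_pi_mul_I]
    simp

lemma pow_mul_conj_pow_circleMap (j k : ℕ) (ρ θ : ℝ) :
    circleMap 0 ρ θ ^ j * conj (circleMap 0 ρ θ) ^ k =
      (ρ : ℂ) ^ (j + k) * Complex.exp (((j : ℤ) - k : ℤ) * Complex.I * θ) := by
  rw [conj_circleMap_zero, circleMap_zero, circleMap_zero, mul_pow, mul_pow,
    ← Complex.exp_nat_mul, ← Complex.exp_nat_mul, mul_mul_mul_comm, ← pow_add, ← Complex.exp_add]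
  congr 2
  push_cast
  ring

lemma circleAverage_pow_mul_conj_pow (j k : ℕ) (ρ : ℝ) :
    circleAverage (fun z : ℂ => z ^ j * conj z ^ k) 0 ρ =
      if j = k then (ρ : ℂ) ^ (2 * j) else 0 := by
  simp only [circleAverage_def, pow_mul_conj_pow_circleMap, intervalIntegral.integral_const_mul,
    integral_exp_int_mul_I_mul, sub_eq_zero, Nat.cast_inj]
  split_ifs with hjk
  · subst hjk
    rw [Complex.real_smul, two_mul j]
    push_cast
    field_simp
  · simp

lemma pow_mul_conj_pow_self (z : ℂ) (k : ℕ) : z ^ k * conj z ^ k = (‖z‖ : ℂ) ^ (2 * k) := by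
  rw [← mul_pow, Complex.mul_conj', ← pow_mul]

lemma designDefect_pow_mul_conj_pow_self (k : ℕ) :
    designDefect X w (fun z => z ^ k * conj z ^ k) = 0 := by
  simp only [designDefect, circleAverage_pow_mul_conj_pow, if_true]
  simp [pow_mul_conj_pow_self]

lemma designDefect_pow_add_mul_conj_pow {s : ℕ} (hs : s ≠ 0) (k : ℕ) :
    designDefect X w (fun z => z ^ (s + k) * conj z ^ k) =
      -∑ z ∈ X, (w z : ℂ) * (‖z‖ : ℂ) ^ (2 * k) * z ^ s := by
  simp only [designDefect, circleAverage_pow_mul_conj_pow, Nat.add_eq_right, hs, if_false, zero_sub,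
    ← sum_neg_distrib]
  refine sum_congr rfl fun z _ => ?_
  rw [pow_add, mul_assoc, pow_mul_conj_pow_self, Complex.real_smul]
  ring

lemma forall_designDefect_pow_mul_conj_pow_iff (t : ℕ) :
    (∀ j k, j + k ≤ t → designDefect X w (fun z => z ^ j * conj z ^ k) = 0) ↔
      ∀ s s₁ : ℕ, 1 ≤ s → s ≤ t → s₁ ≤ (t - s) / 2 →
        ∑ z ∈ X, (w z : ℂ) * (‖z‖ : ℂ) ^ (2 * s₁) * z ^ s = 0 := by
  constructor
  · intro h s s₁ hs _ hs₁
    rw [Nat.le_div_iff_mul_le two_pos] at hs₁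
    simpa [designDefect_pow_add_mul_conj_pow (Nat.one_le_iff_ne_zero.1 hs)] using
      h (s + s₁) s₁ (by omega)
  · intro h j k hjk
    have hmoment : ∀ s k, s ≠ 0 → s + k + k ≤ t →
        designDefect X w (fun z => z ^ (s + k) * conj z ^ k) = 0 := fun s k hs hsk => by
      rw [designDefect_pow_add_mul_conj_pow hs, h s k (by omega) (by omega)
        (by rw [Nat.le_div_iff_mul_le two_pos]; omega), neg_zero]
    rcases lt_trichotomy j k with hlt | rfl | hgt
    · obtain ⟨s, rfl⟩ : ∃ s, k = s + j := ⟨k - j, by omega⟩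
      have hswap : (fun z : ℂ => z ^ j * conj z ^ (s + j)) =
          fun z => conj (z ^ (s + j) * conj z ^ j) := by
        ext z
        simp [mul_comm]
      rw [hswap, designDefect_conj, hmoment s j (by omega) (by omega), map_zero]
    · exact designDefect_pow_mul_conj_pow_self j
    · obtain ⟨s, rfl⟩ : ∃ s, j = s + k := ⟨j - k, by omega⟩
      exact hmoment s k (by omega) (by omega)

lemma forall_designDefect_re_pow_mul_im_pow_iff (t : ℕ) :
    (∀ a b, a + b ≤ t → designDefect X w (fun z => (z.re : ℂ) ^ a * (z.im : ℂ) ^ b) = 0) ↔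
      ∀ j k, j + k ≤ t → designDefect X w (fun z => z ^ j * conj z ^ k) = 0 := by
  have hlinear := totalDegree_C_mul_X_add_C_mul_X_le (σ := Fin 2) (R := ℂ)
  constructor
  · intro h j k hjk
    simp_rw [pow_mul_conj_pow_eq_eval]
    exact designDefect_eval_eq_zero (v := fun z => ![(z.re : ℂ), (z.im : ℂ)]) (by fun_prop) h
      ((totalDegree_pow_mul_pow_le (hlinear _ _ _ _) (hlinear _ _ _ _) j k).trans hjk)
  · intro h a b hab
    simp_rw [re_pow_mul_im_pow_eq_eval]
    exact designDefect_eval_eq_zero (v := fun z => ![z, conj z]) (by fun_prop) h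
      ((totalDegree_pow_mul_pow_le (hlinear _ _ _ _) (hlinear _ _ _ _) a b).trans hab)

lemma isEuclideanDesign2_iff_re_pow_mul_im_pow (t : ℕ) :
    IsEuclideanDesign2 X w t ↔
      ∀ a b, a + b ≤ t → designDefect X w (fun z => (z.re : ℂ) ^ a * (z.im : ℂ) ^ b) = 0 := by
  have hcast (a b : ℕ) : designDefect X w (fun z => (z.re : ℂ) ^ a * (z.im : ℂ) ^ b) =
      designDefect X w (fun z => z.re ^ a * z.im ^ b) := by
    simpa using designDefect_ofReal (𝕜 := ℂ) (X := X) (w := w) fun z => z.re ^ a * z.im ^ b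
  simp only [hcast, Complex.ofReal_eq_zero, isEuclideanDesign2_iff_designDefect]
  constructor
  · intro h a b hab
    have hdeg := totalDegree_pow_mul_pow_le (totalDegree_X (R := ℝ) (0 : Fin 2)).le
      (totalDegree_X (R := ℝ) (1 : Fin 2)).le a b
    simpa using h _ (hdeg.trans hab)
  · intro h f hf
    exact designDefect_eval_eq_zero (v := fun z => ![z.re, z.im]) (by fun_prop) h hf

end EuclideanDesign2

theorem euclideanDesign2_iff_moments_general (X : Finset ℂ) (w : ℂ → ℝ) (t : ℕ) :
    IsEuclideanDesign2 X w t ↔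
      ∀ s s₁ : ℕ, 1 ≤ s → s ≤ t → s₁ ≤ (t - s) / 2 →
        ∑ z ∈ X, (w z : ℂ) * (‖z‖ : ℂ) ^ (2 * s₁) * z ^ s = 0 := by
  rw [EuclideanDesign2.isEuclideanDesign2_iff_re_pow_mul_im_pow,
    EuclideanDesign2.forall_designDefect_re_pow_mul_im_pow_iff,
    EuclideanDesign2.forall_designDefect_pow_mul_conj_pow_iff]

theorem euclideanDesign2_iff_moments (X : Finset ℂ) (w : ℂ → ℝ) (t : ℕ)
    (h0 : (0 : ℂ) ∉ X) (hw : ∀ z ∈ X, 0 < w z) :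
    IsEuclideanDesign2 X w t ↔
      ∀ s s₁ : ℕ, 1 ≤ s → s ≤ t → s₁ ≤ (t - s) / 2 →
        ∑ z ∈ X, (w z : ℂ) * (‖z‖ : ℂ) ^ (2 * s₁) * z ^ s = 0 :=
  euclideanDesign2_iff_moments_general X w t
end

section
/- For f(x) = 2(x_1⁶+x_2⁶+x_3⁶) - 15(x_1⁴x_2²+x_1²x_2⁴+x_1⁴x_3²+x_1²x_3⁴+x_2⁴x_3²+x_2²x_3⁴) + 180x_1²x_2²x_3² on ℝⁿ (n ≥ 3) and 0 ≤ k ≤ n, the sum Σ_{x ∈ I^n_k} f(x) = 6·2^k·C(n-1,k-1) - 90·2^k·C(n-2,k-2) + 180·2^k·C(n-3,k-3). -/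
/-- Binomial coefficient with the convention that it is `0` for negative arguments. -/
def intChoose (a b : ℤ) : ℤ :=
  if a < 0 ∨ b < 0 then 0 else (a.toNat.choose b.toNat : ℤ)

/-- The set `I^n_k` of vectors in `{-1,0,1}^n ⊂ ℝⁿ` with squared norm `k`. -/
noncomputable def boxLayer (n k : ℕ) : Finset (Fin n → ℝ) :=
  (Fintype.piFinset fun _ : Fin n => ({-1, 0, 1} : Finset ℝ)).filter
    fun x => ∑ i, x i ^ 2 = k

/-! On `{-1, 0, 1}` we have `a ^ 4 = a ^ 6 = a ^ 2`, so on `I^n_k` the polynomial `f` is a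
combination of the monomials `∏ i ∈ T, x i ^ 2` with `#T = 1, 2, 3`. Such a monomial is the
indicator of `T ⊆ supp x`, so its sum over `I^n_k` is `2 ^ k * C(n - #T, k - #T)`: choose the other
`k - #T` support coordinates, then a sign on each of the `k`. This count is the coefficient of
`X ^ k` in `∏ i, ∑ a ∈ {-1, 0, 1}, w_i(a) X ^ [a ≠ 0] = (2X) ^ #T (1 + 2X) ^ (n - #T)`, where
`w_i(a) = a ^ 2` for `i ∈ T` and `w_i(a) = 1` otherwise. -/

open Polynomial Finset

namespace BoxLayer

variable {n : ℕ}

lemma pow_eq_sq_of_mem {a : ℝ} (ha : a ∈ ({-1, 0, 1} : Finset ℝ)) {j : ℕ} (hj : Even j)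
    (hj0 : j ≠ 0) : a ^ j = a ^ 2 := by
  simp only [mem_insert, mem_singleton] at ha
  rcases ha with rfl | rfl | rfl <;> simp [hj.neg_one_pow, hj0]

lemma sq_eq_ite_of_mem {a : ℝ} (ha : a ∈ ({-1, 0, 1} : Finset ℝ)) :
    a ^ 2 = if a ≠ 0 then 1 else 0 := by
  simp only [mem_insert, mem_singleton] at ha
  rcases ha with rfl | rfl | rfl <;> norm_num

lemma boxLayer_eq_filter_card_support (k : ℕ) :
    boxLayer n k = (Fintype.piFinset fun _ : Fin n => ({-1, 0, 1} : Finset ℝ)).filter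
      fun x => #{i | x i ≠ 0} = k := by
  refine filter_congr fun x hx => ?_
  rw [sum_congr rfl fun i _ => sq_eq_ite_of_mem (Fintype.mem_piFinset.mp hx i),
    sum_boole, Nat.cast_inj]

lemma sum_piFinset_prod_sq_mul_X_pow (T : Finset (Fin n)) :
    ∑ x ∈ Fintype.piFinset (fun _ : Fin n => ({-1, 0, 1} : Finset ℝ)),
      C (∏ i ∈ T, x i ^ 2) * X ^ #{i | x i ≠ 0} =
      (X ^ #T * (1 + X) ^ (n - #T)).comp (C 2 * X) := by
  have hterm : ∀ x : Fin n → ℝ, C (∏ i ∈ T, x i ^ 2) * X ^ #{i | x i ≠ 0} =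
      ∏ i, C (if i ∈ T then x i ^ 2 else 1) * X ^ (if x i ≠ 0 then 1 else 0) := by
    intro x
    rw [prod_mul_distrib, ← map_prod, prod_ite_mem, univ_inter, prod_pow_eq_pow_sum, card_filter]
  have hcoord : ∀ i, ∑ a ∈ ({-1, 0, 1} : Finset ℝ),
      C (if i ∈ T then a ^ 2 else 1) * X ^ (if a ≠ 0 then 1 else 0) =
      if i ∈ T then C 2 * X else 1 + C 2 * X := by
    intro i
    rw [sum_insert (by norm_num), sum_insert (by norm_num), sum_singleton]
    by_cases hi : i ∈ T <;> norm_num [hi, map_ofNat C 2] <;> ring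
  simp_rw [hterm]
  rw [← prod_univ_sum _ fun i a => C (if i ∈ T then a ^ 2 else 1) * X ^ (if a ≠ 0 then 1 else 0),
    prod_congr rfl fun i _ => hcoord i, prod_ite, prod_const, prod_const, filter_mem_eq_inter,
    univ_inter, filter_not, filter_mem_eq_inter, univ_inter,
    ← compl_eq_univ_sdiff, card_compl, Fintype.card_fin]
  simp [mul_comp, pow_comp, mul_pow]

lemma intChoose_sub_of_le {m : ℕ} (k : ℕ) (hm : m ≤ n) :
    intChoose ((n : ℤ) - m) ((k : ℤ) - m) = if m ≤ k then ((n - m).choose (k - m) : ℤ) else 0 := by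
  unfold intChoose
  split_ifs
  · omega
  · rfl
  · rw [show ((n : ℤ) - m).toNat = n - m by omega, show ((k : ℤ) - m).toNat = k - m by omega]
  · omega

theorem sum_boxLayer_prod_sq (k : ℕ) (T : Finset (Fin n)) :
    ∑ x ∈ boxLayer n k, ∏ i ∈ T, x i ^ 2 = ((2 ^ k * intChoose (n - #T) (k - #T) : ℤ) : ℝ) := by
  have hcoeff := congrArg (coeff · k) (sum_piFinset_prod_sq_mul_X_pow T)
  simp only [finsetSum_coeff, coeff_C_mul_X_pow, comp_C_mul_X_coeff, coeff_X_pow_mul',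
    coeff_one_add_X_pow, @eq_comm _ k] at hcoeff
  have hT : #T ≤ n := card_le_univ T |>.trans_eq (Fintype.card_fin n)
  rw [boxLayer_eq_filter_card_support, sum_filter, hcoeff, intChoose_sub_of_le k hT]
  split_ifs <;> push_cast <;> ring

lemma sum_boxLayer_sq (k : ℕ) (i : Fin n) :
    ∑ x ∈ boxLayer n k, x i ^ 2 = ((2 ^ k * intChoose (n - 1) (k - 1) : ℤ) : ℝ) := by
  simpa using sum_boxLayer_prod_sq k {i}

lemma sum_boxLayer_sq_mul_sq (k : ℕ) {i j : Fin n} (hij : i ≠ j) :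
    ∑ x ∈ boxLayer n k, x i ^ 2 * x j ^ 2 = ((2 ^ k * intChoose (n - 2) (k - 2) : ℤ) : ℝ) := by
  simpa [prod_pair hij, card_pair hij] using sum_boxLayer_prod_sq k {i, j}

lemma sum_boxLayer_sq_mul_sq_mul_sq (k : ℕ) {i j l : Fin n} (hij : i ≠ j) (hil : i ≠ l)
    (hjl : j ≠ l) :
    ∑ x ∈ boxLayer n k, x i ^ 2 * x j ^ 2 * x l ^ 2 =
      ((2 ^ k * intChoose (n - 3) (k - 3) : ℤ) : ℝ) := by
  have h := sum_boxLayer_prod_sq k {i, j, l}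
  rw [card_eq_three.mpr ⟨i, j, l, hij, hil, hjl, rfl⟩] at h
  simp_rw [prod_insert (show i ∉ {j, l} by simp [hij, hil]), prod_pair hjl] at h
  simpa [mul_assoc] using h

end BoxLayer

open BoxLayer

theorem sum_f63_over_boxLayer (n k : ℕ) (hn : 3 ≤ n) :
    ∑ x ∈ boxLayer n k,
        (2 * (x ⟨0, by omega⟩ ^ 6 + x ⟨1, by omega⟩ ^ 6 + x ⟨2, by omega⟩ ^ 6)
          - 15 * (x ⟨0, by omega⟩ ^ 4 * x ⟨1, by omega⟩ ^ 2
            + x ⟨0, by omega⟩ ^ 2 * x ⟨1, by omega⟩ ^ 4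
            + x ⟨0, by omega⟩ ^ 4 * x ⟨2, by omega⟩ ^ 2
            + x ⟨0, by omega⟩ ^ 2 * x ⟨2, by omega⟩ ^ 4
            + x ⟨1, by omega⟩ ^ 4 * x ⟨2, by omega⟩ ^ 2
            + x ⟨1, by omega⟩ ^ 2 * x ⟨2, by omega⟩ ^ 4)
          + 180 * x ⟨0, by omega⟩ ^ 2 * x ⟨1, by omega⟩ ^ 2 * x ⟨2, by omega⟩ ^ 2) =
      ((6 * 2 ^ k * intChoose (n - 1) (k - 1)
        - 90 * 2 ^ k * intChoose (n - 2) (k - 2)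
        + 180 * 2 ^ k * intChoose (n - 3) (k - 3) : ℤ) : ℝ) := by
  set a : Fin n := ⟨0, by omega⟩
  set b : Fin n := ⟨1, by omega⟩
  set c : Fin n := ⟨2, by omega⟩
  have hab : a ≠ b := by simp [a, b, Fin.ext_iff]
  have hac : a ≠ c := by simp [a, c, Fin.ext_iff]
  have hbc : b ≠ c := by simp [b, c, Fin.ext_iff]
  have hreduce : ∀ x ∈ boxLayer n k,
      2 * (x a ^ 6 + x b ^ 6 + x c ^ 6)
        - 15 * (x a ^ 4 * x b ^ 2 + x a ^ 2 * x b ^ 4 + x a ^ 4 * x c ^ 2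
          + x a ^ 2 * x c ^ 4 + x b ^ 4 * x c ^ 2 + x b ^ 2 * x c ^ 4)
        + 180 * x a ^ 2 * x b ^ 2 * x c ^ 2 =
      2 * (x a ^ 2 + x b ^ 2 + x c ^ 2)
        - 30 * (x a ^ 2 * x b ^ 2 + x a ^ 2 * x c ^ 2 + x b ^ 2 * x c ^ 2)
        + 180 * (x a ^ 2 * x b ^ 2 * x c ^ 2) := by
    intro x hx
    have hx := Fintype.mem_piFinset.mp (mem_filter.mp hx).1
    simp only [pow_eq_sq_of_mem (hx _) (by decide : Even 4) (by decide),
      pow_eq_sq_of_mem (hx _) (by decide : Even 6) (by decide)]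
    ring
  rw [sum_congr rfl hreduce]
  simp only [sum_add_distrib, sum_sub_distrib, ← mul_sum, sum_boxLayer_sq,
    sum_boxLayer_sq_mul_sq k hab, sum_boxLayer_sq_mul_sq k hac, sum_boxLayer_sq_mul_sq k hbc,
    sum_boxLayer_sq_mul_sq_mul_sq k hab hac hbc]
  push_cast
  ring
end

section
/- Let λ > 0 with λ ≠ 1, and in ℝ³ let X be the union of the octahedron vertices {±e_i : 1≤i≤3} with weight 1 and the scaled cube vertices (λ/√3)·{-1,1}³ with weight 9/(8λ⁴). Then Σ_{x∈X} w(x)‖x‖^{2s_1} f(x) = 0 for all homogeneous harmonic polynomials f of degree s on ℝ³ with 1 ≤ s ≤ 5 - 2s_1 and s_1 ≥ 0, i.e., (X,w) is a Euclidean 5-design of 14 points in ℝ³. -/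
/-!
A homogeneous polynomial of odd degree sums to zero over a centrally symmetric set, so only the
degrees 2 and 4 matter. In terms of the coefficients `c_d` of `f`, the octahedron sees only the
pure powers `c_{s e_k}`, while the cube `{±1}³` sees exactly the multi-indices with all entries
even. Harmonicity gives linear relations among these: in degree 2 the trace `∑ c_{2 e_k}` vanishes,
and in degree 4 the coefficients of `x_k²` in `Δf` give
`12 ∑ c_{4 e_k} + 4 ∑_{k<i} c_{2e_k+2e_i} = 0`, which is exactly what the weight `9 / (8 λ⁴)`
needs to balance the two orbits.
-/

open Finset
open Finsupp (single)

theorem Finsupp.ext_fin_three_iff {d e : Fin 3 →₀ ℕ} :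
    d = e ↔ d 0 = e 0 ∧ d 1 = e 1 ∧ d 2 = e 2 := by
  simp [Finsupp.ext_iff, Fin.forall_fin_succ]

namespace MvPolynomial

variable {R σ : Type*}

section CommSemiring

variable [CommSemiring R] {f : MvPolynomial σ R} {n : ℕ}

theorem IsHomogeneous.eval_smul (hf : f.IsHomogeneous n) (c : R) (x : σ → R) :
    eval (c • x) f = c ^ n * eval x f := by
  simp only [eval_eq, Finset.mul_sum]
  refine sum_congr rfl fun d hd => ?_
  rw [hf.degree_eq_sum_deg_support hd, ← prod_pow_eq_pow_sum]
  simp only [Pi.smul_apply, smul_eq_mul, mul_pow, prod_mul_distrib]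
  ring

theorem IsHomogeneous.eval_piSingle_one [DecidableEq σ] (hf : f.IsHomogeneous n) (i : σ) :
    eval (Pi.single i 1) f = coeff (single i n) f := by
  rw [eval_eq, Finset.sum_eq_single (single i n)]
  · rw [prod_eq_one fun j hj => ?_, mul_one]
    rw [Finset.mem_singleton.mp (Finsupp.support_single_subset hj), Pi.single_eq_same, one_pow]
  · intro d hd hne
    obtain ⟨j, hj, hji⟩ : ∃ j ∈ d.support, j ≠ i := by
      by_contra! h
      have hd_single : d = single i (d i) := Finsupp.support_subset_singleton.mp fun j hj =>
        Finset.mem_singleton.mpr (h j hj)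
      have hdeg : n = d.degree := hf.degree_eq_sum_deg_support hd
      rw [hd_single, Finsupp.degree_single] at hdeg
      exact hne (hdeg ▸ hd_single)
    rw [prod_eq_zero hj (by rw [Pi.single_eq_of_ne hji, zero_pow (Finsupp.mem_support_iff.mp hj)]),
      mul_zero]
  · intro h
    rw [notMem_support_iff.mp h, zero_mul]

theorem sum_support_coeff_mul_eq [DecidableEq σ] {ι : Type*} (J : Finset ι) (t : ι → σ →₀ ℕ)
    (a : ι → R) {w : (σ →₀ ℕ) → R}
    (hw : ∀ d ∈ f.support, w d = ∑ j ∈ J, if d = t j then a j else 0) :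
    ∑ d ∈ f.support, coeff d f * w d = ∑ j ∈ J, a j * coeff (t j) f := by
  rw [sum_congr rfl fun d hd => by rw [hw d hd, Finset.mul_sum], sum_comm]
  refine sum_congr rfl fun j _ => ?_
  simp only [mul_ite, mul_zero, sum_ite_eq']
  rw [ite_eq_left_iff.mpr fun h => by rw [notMem_support_iff.mp h, zero_mul], mul_comm]

variable [Fintype σ]

noncomputable def laplacian (f : MvPolynomial σ R) : MvPolynomial σ R :=
  ∑ i, pderiv i (pderiv i f)

theorem coeff_laplacian [DecidableEq σ] (f : MvPolynomial σ R) (m : σ →₀ ℕ) :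
    coeff m (laplacian f) = ∑ i, coeff (m + single i 2) f * ((m i + 1) * (m i + 2)) := by
  simp only [laplacian, coeff_sum, coeff_pderiv, Finsupp.add_apply, add_assoc,
    ← Finsupp.single_add]
  refine sum_congr rfl fun i _ => ?_
  simp
  ring

theorem sum_coeff_single_two_eq_zero [DecidableEq σ] [NoZeroDivisors R] [NeZero (2 : R)]
    (hΔ : laplacian f = 0) : ∑ i, coeff (single i 2) f = 0 := by
  have h := coeff_laplacian f 0
  simp only [hΔ, coeff_zero, zero_add, Finsupp.coe_zero, Pi.zero_apply, Nat.cast_zero, one_mul,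
    ← sum_mul] at h
  exact (mul_eq_zero.mp h.symm).resolve_right two_ne_zero

theorem sum_coeff_single_add_single_eq_zero [DecidableEq σ] (hΔ : laplacian f = 0) :
    ∑ k, ∑ i, (if k = i then 12 else 2) * coeff (single k 2 + single i 2) f = 0 := by
  have hk (k : σ) : ∑ i, (if k = i then 12 else 2) * coeff (single k 2 + single i 2) f =
      coeff (single k 2) (laplacian f) := by
    rw [coeff_laplacian]
    refine sum_congr rfl fun i _ => ?_
    rw [Finsupp.single_apply]
    split_ifs <;> norm_num [mul_comm]
  simp only [hk, hΔ, coeff_zero, sum_const_zero]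

end CommSemiring

section CommRing

variable [CommRing R] {f : MvPolynomial σ R} {n : ℕ}

theorem IsHomogeneous.eval_neg (hf : f.IsHomogeneous n) (x : σ → R) :
    eval (-x) f = (-1) ^ n * eval x f := by
  rw [← hf.eval_smul, neg_one_smul]

variable [Fintype σ] [DecidableEq σ]

theorem IsHomogeneous.sum_eval_piSingle_add_eval_neg (hf : f.IsHomogeneous n) :
    ∑ i, (eval (Pi.single i 1) f + eval (-Pi.single i 1) f) =
      (1 + (-1) ^ n) * ∑ i, coeff (single i n) f := by
  simp only [hf.eval_neg, hf.eval_piSingle_one, Finset.mul_sum]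
  ring_nf

variable [DecidableEq R] [NeZero (2 : R)]

theorem sum_eval_signs (f : MvPolynomial σ R) :
    ∑ ε ∈ Fintype.piFinset (fun _ : σ => ({-1, 1} : Finset R)), eval ε f =
      ∑ d ∈ f.support, coeff d f * ∏ i, ((-1) ^ d i + 1) := by
  have hne : (-1 : R) ≠ 1 := fun h => two_ne_zero (α := R) (by linear_combination -h)
  simp only [eval_eq']
  rw [sum_comm]
  refine sum_congr rfl fun d _ => ?_
  rw [← Finset.mul_sum, ← prod_univ_sum (fun _ => ({-1, 1} : Finset R)) (fun i e => e ^ d i)]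
  simp only [sum_pair hne, one_pow]

theorem IsHomogeneous.sum_eval_signs_eq_zero (hf : f.IsHomogeneous n) (hn : Odd n) :
    ∑ ε ∈ Fintype.piFinset (fun _ : σ => ({-1, 1} : Finset R)), eval ε f = 0 := by
  rw [sum_eval_signs]
  refine sum_eq_zero fun d hd => ?_
  obtain ⟨i, hi⟩ : ∃ i, Odd (d i) := by
    by_contra! h
    refine Nat.not_even_iff_odd.mpr hn ?_
    rw [hf.degree_eq_sum_deg_support hd]
    exact Finset.even_sum _ fun i _ => Nat.not_odd_iff_even.mp (h i)
  rw [prod_eq_zero (mem_univ i) (by rw [hi.neg_one_pow, neg_add_cancel]), mul_zero]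

end CommRing

section FinThree

variable [CommRing R] {f : MvPolynomial (Fin 3) R}

theorem prod_neg_one_pow_add_one_of_degree_eq_two {d : Fin 3 →₀ ℕ} (hd : d.degree = 2) :
    ∏ i, ((-1 : R) ^ d i + 1) = ∑ k, if d = single k 2 then 8 else 0 := by
  rw [Finsupp.degree_eq_sum, Fin.sum_univ_three] at hd
  simp only [Fin.prod_univ_three, Fin.sum_univ_three, Finsupp.ext_fin_three_iff,
    Finsupp.single_apply, Fin.reduceEq, if_true, if_false]
  generalize d 0 = a, d 1 = b, d 2 = c at hd ⊢
  have : a ≤ 2 := by omega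
  have : b ≤ 2 := by omega
  have : c ≤ 2 := by omega
  interval_cases a <;> interval_cases b <;> interval_cases c <;> first | omega | norm_num

-- The mixed index `2e_k + 2e_i` is hit by both `(k, i)` and `(i, k)`, hence the weight 4.
theorem prod_neg_one_pow_add_one_of_degree_eq_four {d : Fin 3 →₀ ℕ} (hd : d.degree = 4) :
    ∏ i, ((-1 : R) ^ d i + 1) =
      ∑ k, ∑ i, if d = single k 2 + single i 2 then (if k = i then 8 else 4) else 0 := by
  rw [Finsupp.degree_eq_sum, Fin.sum_univ_three] at hd
  simp only [Fin.prod_univ_three, Fin.sum_univ_three, Finsupp.ext_fin_three_iff,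
    Finsupp.single_apply, Finsupp.add_apply, Fin.reduceEq, if_true, if_false, add_zero, zero_add]
  generalize d 0 = a, d 1 = b, d 2 = c at hd ⊢
  have : a ≤ 4 := by omega
  have : b ≤ 4 := by omega
  have : c ≤ 4 := by omega
  interval_cases a <;> interval_cases b <;> interval_cases c <;> first | omega | norm_num

variable [DecidableEq R] [NeZero (2 : R)]

theorem IsHomogeneous.sum_eval_signs_of_degree_eq_two (hf : f.IsHomogeneous 2) :
    ∑ ε ∈ Fintype.piFinset (fun _ : Fin 3 => ({-1, 1} : Finset R)), eval ε f =
      ∑ k, 8 * coeff (single k 2) f := by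
  rw [sum_eval_signs]
  exact sum_support_coeff_mul_eq _ _ _ fun d hd =>
    prod_neg_one_pow_add_one_of_degree_eq_two (hf.degree_eq_sum_deg_support hd).symm

theorem IsHomogeneous.sum_eval_signs_of_degree_eq_four (hf : f.IsHomogeneous 4) :
    ∑ ε ∈ Fintype.piFinset (fun _ : Fin 3 => ({-1, 1} : Finset R)), eval ε f =
      ∑ k, ∑ i, (if k = i then 8 else 4) * coeff (single k 2 + single i 2) f := by
  rw [sum_eval_signs, ← Fintype.sum_prod_type']
  refine sum_support_coeff_mul_eq univ (fun p : Fin 3 × Fin 3 => single p.1 2 + single p.2 2)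
    (fun p => if p.1 = p.2 then 8 else 4) fun d hd => ?_
  rw [prod_neg_one_pow_add_one_of_degree_eq_four (hf.degree_eq_sum_deg_support hd).symm,
    ← Fintype.sum_prod_type']

theorem IsHomogeneous.sum_eval_signs_of_degree_eq_four_of_laplacian_eq_zero
    (hf : f.IsHomogeneous 4) (hΔ : laplacian f = 0) :
    ∑ ε ∈ Fintype.piFinset (fun _ : Fin 3 => ({-1, 1} : Finset R)), eval ε f =
      -16 * ∑ k, coeff (single k 4) f := by
  have h := sum_coeff_single_add_single_eq_zero hΔ
  rw [hf.sum_eval_signs_of_degree_eq_four]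
  simp only [Fin.sum_univ_three, Fin.reduceEq, if_true, if_false, ← Finsupp.single_add,
    Nat.reduceAdd] at h ⊢
  linear_combination 2 * h

end FinThree

end MvPolynomial

open MvPolynomial in
theorem octahedron_cube_tight_5design_general (l : ℝ) (hl : 0 < l)
    (s s₁ : ℕ) (hs : 1 ≤ s) (hts : s + 2 * s₁ ≤ 5)
    (f : MvPolynomial (Fin 3) ℝ) (hf : f.IsHomogeneous s)
    (hharm : ∑ i : Fin 3, pderiv i (pderiv i f) = 0) :
    (∑ i : Fin 3, ((1 : ℝ) * (1 : ℝ) ^ (2 * s₁) * eval (Pi.single i (1 : ℝ)) f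
        + (1 : ℝ) * (1 : ℝ) ^ (2 * s₁) * eval (-(Pi.single i (1 : ℝ))) f))
      + ∑ ε ∈ Fintype.piFinset (fun _ : Fin 3 => ({-1, 1} : Finset ℝ)),
          (9 / (8 * l ^ 4)) * l ^ (2 * s₁) * eval (fun i => l / Real.sqrt 3 * ε i) f
      = 0 := by
  have hΔ : laplacian f = 0 := hharm
  have hcube (ε : Fin 3 → ℝ) : (fun i => l / √3 * ε i) = (l / √3) • ε := rfl
  simp only [one_mul, one_pow, hcube, hf.eval_smul, ← Finset.mul_sum]
  rw [hf.sum_eval_piSingle_add_eval_neg]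
  rcases Nat.even_or_odd s with ⟨k, rfl⟩ | hodd
  · obtain rfl | rfl : k = 1 ∨ k = 2 := by omega
    · rw [hf.sum_eval_signs_of_degree_eq_two, ← Finset.mul_sum, sum_coeff_single_two_eq_zero hΔ]
      simp
    · obtain rfl : s₁ = 0 := by omega
      have hc : (l / √3) ^ (2 + 2) = l ^ 4 / 9 := by
        rw [div_pow, show (√3) ^ (2 + 2) = (√3 ^ 2) ^ 2 by ring, Real.sq_sqrt (by norm_num)]
        norm_num
      rw [hf.sum_eval_signs_of_degree_eq_four_of_laplacian_eq_zero hΔ, hc]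
      field_simp
      ring
  · rw [hodd.neg_one_pow, hf.sum_eval_signs_eq_zero hodd]
    simp

open MvPolynomial in
/-- The union of the octahedron `{±e_i}` (weight 1) and the scaled cube
`(λ/√3)·{-1,1}³` (weight `9/(8λ⁴)`) is a Euclidean 5-design in `ℝ³`
(Neumaier–Seidel criterion). -/
theorem octahedron_cube_tight_5design (l : ℝ) (hl : 0 < l) (hl1 : l ≠ 1)
    (s s₁ : ℕ) (hs : 1 ≤ s) (hts : s + 2 * s₁ ≤ 5)
    (f : MvPolynomial (Fin 3) ℝ) (hf : f.IsHomogeneous s)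
    (hharm : ∑ i : Fin 3, pderiv i (pderiv i f) = 0) :
    (∑ i : Fin 3, ((1 : ℝ) * (1 : ℝ) ^ (2 * s₁) * eval (Pi.single i (1 : ℝ)) f
        + (1 : ℝ) * (1 : ℝ) ^ (2 * s₁) * eval (-(Pi.single i (1 : ℝ))) f))
      + ∑ ε ∈ Fintype.piFinset (fun _ : Fin 3 => ({-1, 1} : Finset ℝ)),
          (9 / (8 * l ^ 4)) * l ^ (2 * s₁) * eval (fun i => l / Real.sqrt 3 * ε i) f
      = 0 :=
  octahedron_cube_tight_5design_general l hl s s₁ hs hts f hf hharm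
end
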